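/- arXiv:1802.06479 — 2 statements merged into one kernel-verified Lean document; each statement's English description precedes it below -/
import Mathlib

section
/- Let g: [0,∞) → R^{k×m} be the impulse response g(t) = W^{1/2} Rᵀ exp(-Lt) M of the leader-follower system, where L = RWRᵀ is a connected graph Laplacian and M is a leader-selection matrix. Then ∫₀^∞ ‖g(t)‖_F² dt = tr(Mᵀ W_o M) < ∞, where W_o = (1/2)I_n - (1/(2n))𝟙𝟙ᵀ; in particular g ∈ L². -/
/-
For a column `u` of `M` put `x(t) = exp(-tL) u`. As `(W^{1/2}Rᵀ)ᵀ W^{1/2}Rᵀ = L`, the squared norm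
of the column `W^{1/2}Rᵀ x(t)` of `g t` is `xᵀLx = -(1/2) d/dt ‖x‖²`, so its integral over `(0, ∞)`
is half the drop of `‖x‖²` from `‖u‖²` to its limit. The flow preserves `𝟙ᵀx` (as
`L𝟙 = 0 = 𝟙ᵀL`), and connectivity makes `L` positive definite on `𝟙^⊥`, hence (by compactness of
the unit sphere) bounded below there by some `c > 0`; Grönwall then makes the mean-zero part of
`x` decay like `e^{-ct}`, so `‖x(t)‖² → (𝟙ᵀu)²/n`. Summing over the columns of `M` gives
`½ tr(Mᵀ(I - 𝟙𝟙ᵀ/n)M) = tr(Mᵀ W_o M)`.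
-/

open Matrix MeasureTheory Finset Filter Topology NormedSpace

section Incidence

variable {V E : Type*} [DecidableEq V]

def incidenceMatrix (src snk : E → V) : Matrix V E ℝ :=
  Matrix.of fun i e => if src e = i then 1 else if snk e = i then -1 else 0

theorem transpose_incidenceMatrix_mulVec [Fintype V] {src snk : E → V} (hloop : ∀ e, src e ≠ snk e)
    (y : V → ℝ) : (incidenceMatrix src snk)ᵀ *ᵥ y = fun e => y (src e) - y (snk e) := by
  ext e
  have hcol : (incidenceMatrix src snk)ᵀ e = Pi.single (src e) 1 - Pi.single (snk e) 1 := by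
    ext i
    rcases eq_or_ne (src e) i with rfl | hs
    · simp [incidenceMatrix, hloop e]
    · rcases eq_or_ne (snk e) i with rfl | ht
      · simp [incidenceMatrix, hs]
      · simp [incidenceMatrix, hs, ht, hs.symm, ht.symm]
  rw [mulVec, hcol, sub_dotProduct, single_one_dotProduct, single_one_dotProduct]

end Incidence

namespace Matrix

variable {V E : Type*} [Fintype E] [DecidableEq E]

theorem dotProduct_mul_diagonal_mul_transpose_mulVec [Fintype V] (R : Matrix V E ℝ) (w : E → ℝ)
    (y : V → ℝ) : y ⬝ᵥ (R * diagonal w * Rᵀ) *ᵥ y = ∑ e, w e * (Rᵀ *ᵥ y) e ^ 2 := by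
  rw [← mulVec_mulVec, ← mulVec_mulVec, dotProduct_mulVec, ← mulVec_transpose]
  exact sum_congr rfl fun e _ => by rw [mulVec_diagonal]; ring

theorem transpose_mul_diagonal_mul_transpose (R : Matrix V E ℝ) (w : E → ℝ) :
    (R * diagonal w * Rᵀ)ᵀ = R * diagonal w * Rᵀ := by
  rw [transpose_mul, transpose_mul, transpose_transpose, diagonal_transpose, Matrix.mul_assoc]

theorem sum_sq_diagonal_sqrt_mul_transpose_mul {m : Type*} [Fintype V] [Fintype m]
    (R : Matrix V E ℝ) {w : E → ℝ} (hw : ∀ e, 0 ≤ w e) (X : Matrix V m ℝ) :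
    ∑ e, ∑ j, ((diagonal (fun e => √(w e)) * Rᵀ * X) e j) ^ 2 =
      ∑ j, Xᵀ j ⬝ᵥ (R * diagonal w * Rᵀ) *ᵥ Xᵀ j := by
  have hentry : ∀ e j, (diagonal (fun e => √(w e)) * Rᵀ * X) e j = √(w e) * (Rᵀ *ᵥ Xᵀ j) e :=
    fun e j => by
      rw [Matrix.mul_assoc]
      exact mulVec_diagonal _ _ e
  simp_rw [hentry, mul_pow, Real.sq_sqrt (hw _), dotProduct_mul_diagonal_mul_transpose_mulVec]
  exact sum_comm

theorem trace_transpose_mul_mul {ι m : Type*} [Fintype ι] [Fintype m]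
    (X : Matrix ι m ℝ) (A : Matrix ι ι ℝ) :
    trace (Xᵀ * A * X) = ∑ l, Xᵀ l ⬝ᵥ A *ᵥ Xᵀ l := by
  simp only [trace, diag, mul_apply, transpose_apply, dotProduct, mulVec, sum_mul, mul_sum]
  exact sum_congr rfl fun l _ => sum_comm.trans (sum_congr rfl fun i _ => sum_congr rfl
    fun j _ => by ring)

theorem dotProduct_half_sub_centering_mulVec {ι : Type*} [Fintype ι] [DecidableEq ι]
    (u : ι → ℝ) :
    u ⬝ᵥ ((1 / 2 : ℝ) • (1 : Matrix ι ι ℝ) -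
        (1 / (2 * (Fintype.card ι : ℝ))) • Matrix.of fun _ _ => (1 : ℝ)) *ᵥ u =
      (u ⬝ᵥ u - (1 ⬝ᵥ u) ^ 2 / Fintype.card ι) / 2 := by
  have hJ : (Matrix.of fun _ _ => (1 : ℝ) : Matrix ι ι ℝ) *ᵥ u = (1 ⬝ᵥ u) • 1 := by
    ext i
    simp [mulVec, dotProduct]
  rw [sub_mulVec, smul_mulVec, smul_mulVec, hJ, one_mulVec, dotProduct_sub, dotProduct_smul,
    dotProduct_smul, dotProduct_smul, dotProduct_one, ← one_dotProduct]
  simp only [smul_eq_mul]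
  ring

end Matrix

theorem exists_pos_mul_norm_sq_le_of_isClosed {E : Type*} [NormedAddCommGroup E]
    [NormedSpace ℝ E] [FiniteDimensional ℝ E] {S : Set E} (hS : IsClosed S)
    (hS_smul : ∀ (a : ℝ), ∀ y ∈ S, a • y ∈ S) {q : E → ℝ} (hq : Continuous q)
    (hq_smul : ∀ (a : ℝ) y, q (a • y) = a ^ 2 * q y) (hq_pos : ∀ y ∈ S, y ≠ 0 → 0 < q y) :
    ∃ c > 0, ∀ y ∈ S, c * ‖y‖ ^ 2 ≤ q y := by
  have hq_zero : q 0 = 0 := by simpa using hq_smul 0 0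
  have hunit : ∀ y ∈ S, y ≠ 0 → ‖y‖⁻¹ • y ∈ S ∩ Metric.sphere 0 1 := fun y hy hy0 =>
    ⟨hS_smul _ y hy, by simp [norm_smul, hy0]⟩
  have hscale : ∀ y, q y = ‖y‖ ^ 2 * q (‖y‖⁻¹ • y) := fun y => by
    rcases eq_or_ne y 0 with rfl | hy0
    · simp [hq_zero]
    · rw [hq_smul, ← mul_assoc, ← mul_pow, mul_inv_cancel₀ (norm_ne_zero_iff.2 hy0), one_pow,
        one_mul]
  rcases (S ∩ Metric.sphere 0 1).eq_empty_or_nonempty with hK | hK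
  · refine ⟨1, one_pos, fun y hy => ?_⟩
    rcases eq_or_ne y 0 with rfl | hy0
    · simp [hq_zero]
    · exact absurd (hunit y hy hy0) (hK ▸ Set.notMem_empty _)
  obtain ⟨y₀, ⟨hy₀S, hy₀⟩, hmin⟩ :=
    ((isCompact_sphere 0 1).inter_left hS).exists_isMinOn hK hq.continuousOn
  have hy₀_ne : y₀ ≠ 0 := ne_zero_of_mem_unit_sphere ⟨y₀, hy₀⟩
  refine ⟨q y₀, hq_pos y₀ hy₀S hy₀_ne, fun y hy => ?_⟩
  rcases eq_or_ne y 0 with rfl | hy0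
  · simp [hq_zero]
  · rw [hscale y, mul_comm (q y₀)]
    exact mul_le_mul_of_nonneg_left (hmin (hunit y hy hy0)) (by positivity)

theorem Matrix.exists_pos_mul_dotProduct_self_le {ι : Type*} [Fintype ι] (L : Matrix ι ι ℝ)
    (hpos : ∀ y : ι → ℝ, 1 ⬝ᵥ y = 0 → y ≠ 0 → 0 < y ⬝ᵥ L *ᵥ y) :
    ∃ c > 0, ∀ y : ι → ℝ, 1 ⬝ᵥ y = 0 → c * (y ⬝ᵥ y) ≤ y ⬝ᵥ L *ᵥ y := by
  -- `ι → ℝ` carries the sup norm; the Euclidean norm is the one with `‖y‖ ^ 2 = y ⬝ᵥ y`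
  have hcont : Continuous fun y : EuclideanSpace ℝ ι => y.ofLp := PiLp.continuous_ofLp 2 _
  obtain ⟨c, hc, hle⟩ := exists_pos_mul_norm_sq_le_of_isClosed
    (S := {y : EuclideanSpace ℝ ι | 1 ⬝ᵥ y.ofLp = 0})
    (isClosed_eq (continuous_const.dotProduct hcont) continuous_const)
    (fun a y hy => by simp_all [dotProduct_smul])
    (hcont.dotProduct (continuous_const.matrix_mulVec hcont))
    (fun a y => by simp [mulVec_smul, dotProduct_smul, smul_dotProduct, sq, mul_assoc])
    (fun y hy hy0 => hpos y.ofLp hy (by simpa using hy0))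
  refine ⟨c, hc, fun y hy => ?_⟩
  have hnorm : ‖WithLp.toLp 2 y‖ ^ 2 = y ⬝ᵥ y := by
    rw [EuclideanSpace.norm_sq_eq]
    simp [dotProduct, sq]
  simpa [hnorm] using hle (WithLp.toLp 2 y) hy

theorem le_mul_exp_neg_of_hasDerivAt_le {h h' : ℝ → ℝ} {c : ℝ}
    (hd : ∀ t, HasDerivAt h (h' t) t) (hle : ∀ t, h' t ≤ -c * h t) {t : ℝ} (ht : 0 ≤ t) :
    h t ≤ h 0 * Real.exp (-(c * t)) := by
  have hρ : ∀ s, HasDerivAt (fun s => h s * Real.exp (c * s))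
      (h' s * Real.exp (c * s) + h s * (Real.exp (c * s) * c)) s := fun s =>
    (hd s).mul (((hasDerivAt_id s).const_mul c).exp.congr_deriv (by simp))
  have hanti : Antitone fun s => h s * Real.exp (c * s) := by
    refine antitone_of_deriv_nonpos (fun s => (hρ s).differentiableAt) fun s => ?_
    rw [(hρ s).deriv]
    nlinarith [hle s, Real.exp_pos (c * s)]
  have := hanti ht
  simp only [mul_zero, Real.exp_zero, mul_one] at this
  calc h t = h t * Real.exp (c * t) * Real.exp (-(c * t)) := by
        rw [mul_assoc, ← Real.exp_add, add_neg_cancel, Real.exp_zero, mul_one]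
    _ ≤ h 0 * Real.exp (-(c * t)) := mul_le_mul_of_nonneg_right this (Real.exp_pos _).le

theorem tendsto_zero_of_hasDerivAt_le_neg_mul {h h' : ℝ → ℝ} {c : ℝ} (hc : 0 < c)
    (h_nonneg : ∀ t, 0 ≤ h t) (hd : ∀ t, HasDerivAt h (h' t) t)
    (hle : ∀ t, h' t ≤ -c * h t) : Tendsto h atTop (𝓝 0) := by
  have hbound : Tendsto (fun t => h 0 * Real.exp (-(c * t))) atTop (𝓝 0) := by
    simpa using ((Real.tendsto_exp_neg_atTop_nhds_zero.comp
      (tendsto_id.const_mul_atTop hc)).const_mul (h 0))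
  exact tendsto_of_tendsto_of_tendsto_of_le_of_le' tendsto_const_nhds hbound
    (Eventually.of_forall h_nonneg)
    ((eventually_ge_atTop 0).mono fun t ht => le_mul_exp_neg_of_hasDerivAt_le hd hle ht)

-- for empty `ι` the junk value `x / 0 = 0` is harmless, as then `u = 0`
noncomputable def meanZeroPart {ι : Type*} [Fintype ι] (u : ι → ℝ) : ι → ℝ :=
  u - ((1 ⬝ᵥ u) / Fintype.card ι) • 1

theorem one_dotProduct_meanZeroPart {ι : Type*} [Fintype ι] (u : ι → ℝ) :
    1 ⬝ᵥ meanZeroPart u = 0 := by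
  have hn : 1 ⬝ᵥ (1 : ι → ℝ) = Fintype.card ι := by simp
  rw [meanZeroPart, dotProduct_sub, dotProduct_smul, smul_eq_mul, hn, sub_eq_zero,
    div_mul_cancel_of_imp fun h => ?_]
  simp_all [Fintype.card_eq_zero_iff]

theorem HasDerivAt.dotProduct_self {ι : Type*} [Fintype ι] {x : ℝ → ι → ℝ} {x' : ι → ℝ}
    {t : ℝ} (hx : HasDerivAt x x' t) :
    HasDerivAt (fun s => x s ⬝ᵥ x s) (2 * (x t ⬝ᵥ x')) t := by
  have hxi := hasDerivAt_pi.1 hx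
  refine (HasDerivAt.fun_sum (u := univ) fun i _ => (hxi i).mul (hxi i)).congr_deriv ?_
  simp only [dotProduct, mul_sum]
  exact sum_congr rfl fun i _ => by ring

namespace Matrix

variable {ι : Type*} [Fintype ι] [DecidableEq ι]

theorem hasDerivAt_exp_neg_smul_mulVec (L : Matrix ι ι ℝ) (u : ι → ℝ) (t : ℝ) :
    HasDerivAt (fun s : ℝ => exp (-(s • L)) *ᵥ u) (-(L *ᵥ exp (-(t • L)) *ᵥ u)) t := by
  -- matrices carry no global norm; any norm inducing the product topology will do here
  let _ : NormedRing (Matrix ι ι ℝ) := Matrix.linftyOpNormedRing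
  let _ : NormedAlgebra ℝ (Matrix ι ι ℝ) := Matrix.linftyOpNormedAlgebra
  let evalAt : Matrix ι ι ℝ →L[ℝ] ι → ℝ := LinearMap.toContinuousLinearMap
    { toFun := (· *ᵥ u), map_add' := (add_mulVec · · u), map_smul' := (smul_mulVec · · u) }
  have h := evalAt.hasFDerivAt.comp_hasDerivAt t (hasDerivAt_exp_smul_const' (𝕂 := ℝ) (-L) t)
  simp only [smul_neg] at h
  refine h.congr_deriv ?_
  change (-L * _) *ᵥ u = _
  rw [neg_mul, neg_mulVec, mulVec_mulVec]
  rfl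

theorem hasDerivAt_exp_neg_smul_mulVec_dotProduct_self (L : Matrix ι ι ℝ) (u : ι → ℝ) (t : ℝ) :
    HasDerivAt (fun s : ℝ => exp (-(s • L)) *ᵥ u ⬝ᵥ exp (-(s • L)) *ᵥ u)
      (-2 * (exp (-(t • L)) *ᵥ u ⬝ᵥ L *ᵥ exp (-(t • L)) *ᵥ u)) t := by
  simpa [dotProduct_neg] using (hasDerivAt_exp_neg_smul_mulVec L u t).dotProduct_self

theorem hasDerivAt_neg_half_mul_exp_neg_smul_mulVec_dotProduct_self (L : Matrix ι ι ℝ)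
    (u : ι → ℝ) (t : ℝ) :
    HasDerivAt (fun s : ℝ => -(1 / 2) * (exp (-(s • L)) *ᵥ u ⬝ᵥ exp (-(s • L)) *ᵥ u))
      (exp (-(t • L)) *ᵥ u ⬝ᵥ L *ᵥ exp (-(t • L)) *ᵥ u) t := by
  refine ((hasDerivAt_exp_neg_smul_mulVec_dotProduct_self L u t).const_mul _).congr_deriv ?_
  ring

variable {L : Matrix ι ι ℝ}

theorem exp_neg_smul_mulVec_one (hL : L *ᵥ 1 = 0) (t : ℝ) :
    exp (-(t • L)) *ᵥ 1 = 1 := by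
  have hderiv : ∀ s, HasDerivAt (fun s : ℝ => exp (-(s • L)) *ᵥ 1) 0 s := fun s => by
    have hcomm : Commute L (exp (-(s • L))) :=
      ((Commute.refl L).smul_right s).neg_right.exp_right
    have h := hasDerivAt_exp_neg_smul_mulVec L 1 s
    rwa [mulVec_mulVec, hcomm.eq, ← mulVec_mulVec, hL, mulVec_zero, neg_zero] at h
  have := is_const_of_deriv_eq_zero (fun s => (hderiv s).differentiableAt)
    (fun s => (hderiv s).deriv) t 0
  simpa using this

theorem one_dotProduct_exp_neg_smul_mulVec (hsymm : Lᵀ = L) (hL : L *ᵥ 1 = 0) (t : ℝ)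
    (y : ι → ℝ) : 1 ⬝ᵥ exp (-(t • L)) *ᵥ y = 1 ⬝ᵥ y := by
  have hT : (exp (-(t • L)))ᵀ = exp (-(t • L)) := by
    rw [← exp_transpose, transpose_neg, transpose_smul, hsymm]
  rw [dotProduct_mulVec, ← hT, vecMul_transpose, exp_neg_smul_mulVec_one hL]

theorem exp_neg_smul_mulVec_dotProduct_self_eq (hsymm : Lᵀ = L) (hL : L *ᵥ 1 = 0) (u : ι → ℝ)
    (t : ℝ) :
    exp (-(t • L)) *ᵥ u ⬝ᵥ exp (-(t • L)) *ᵥ u =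
      (1 ⬝ᵥ u) ^ 2 / Fintype.card ι +
        exp (-(t • L)) *ᵥ meanZeroPart u ⬝ᵥ exp (-(t • L)) *ᵥ meanZeroPart u := by
  set n : ℝ := (Fintype.card ι : ℝ)
  set z := exp (-(t • L)) *ᵥ meanZeroPart u with hz_def
  have hz : 1 ⬝ᵥ z = 0 :=
    (one_dotProduct_exp_neg_smul_mulVec hsymm hL t _).trans (one_dotProduct_meanZeroPart u)
  have hu : exp (-(t • L)) *ᵥ u = ((1 ⬝ᵥ u) / n) • 1 + z := by
    rw [hz_def, meanZeroPart, mulVec_sub, mulVec_smul, exp_neg_smul_mulVec_one hL]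
    abel
  have hsq : (1 ⬝ᵥ u) / n * ((1 ⬝ᵥ u) / n * n) = (1 ⬝ᵥ u) ^ 2 / n := by
    rcases eq_or_ne n 0 with hn | hn
    · simp [hn]
    · field_simp
  have hn : n = 1 ⬝ᵥ (1 : ι → ℝ) := by simp [n]
  simp only [hu, add_dotProduct, dotProduct_add, smul_dotProduct, dotProduct_smul, smul_eq_mul,
    dotProduct_comm z, hz, ← hn, ← hsq]
  ring

structure IsConnectedLaplacian (L : Matrix ι ι ℝ) : Prop where
  transpose_eq : Lᵀ = L
  mulVec_one : L *ᵥ 1 = 0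
  dotProduct_mulVec_nonneg : ∀ y, 0 ≤ y ⬝ᵥ L *ᵥ y
  dotProduct_mulVec_pos : ∀ y, 1 ⬝ᵥ y = 0 → y ≠ 0 → 0 < y ⬝ᵥ L *ᵥ y

namespace IsConnectedLaplacian

theorem tendsto_exp_neg_smul_mulVec_dotProduct_self_of_one_dotProduct_eq_zero
    (hL : L.IsConnectedLaplacian) {y : ι → ℝ} (hy : 1 ⬝ᵥ y = 0) :
    Tendsto (fun t : ℝ => exp (-(t • L)) *ᵥ y ⬝ᵥ exp (-(t • L)) *ᵥ y) atTop (𝓝 0) := by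
  obtain ⟨c, hc, hgap⟩ := exists_pos_mul_dotProduct_self_le L hL.dotProduct_mulVec_pos
  refine tendsto_zero_of_hasDerivAt_le_neg_mul (mul_pos two_pos hc)
    (fun _ => dotProduct_self_star_nonneg _) (hasDerivAt_exp_neg_smul_mulVec_dotProduct_self L y)
    fun t => ?_
  have := hgap _ ((one_dotProduct_exp_neg_smul_mulVec hL.transpose_eq hL.mulVec_one t y).trans hy)
  linarith

theorem tendsto_exp_neg_smul_mulVec_dotProduct_self (hL : L.IsConnectedLaplacian) (u : ι → ℝ) :
    Tendsto (fun t : ℝ => exp (-(t • L)) *ᵥ u ⬝ᵥ exp (-(t • L)) *ᵥ u)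
      atTop (𝓝 ((1 ⬝ᵥ u) ^ 2 / Fintype.card ι)) := by
  simp_rw [exp_neg_smul_mulVec_dotProduct_self_eq hL.transpose_eq hL.mulVec_one u]
  simpa using tendsto_const_nhds.add
    (hL.tendsto_exp_neg_smul_mulVec_dotProduct_self_of_one_dotProduct_eq_zero
      (one_dotProduct_meanZeroPart u))

theorem integrableOn_Ioi_dotProduct_exp_neg_smul_mulVec (hL : L.IsConnectedLaplacian)
    (u : ι → ℝ) :
    IntegrableOn (fun t : ℝ => exp (-(t • L)) *ᵥ u ⬝ᵥ L *ᵥ exp (-(t • L)) *ᵥ u) (Set.Ioi 0) :=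
  integrableOn_Ioi_deriv_of_nonneg'
    (fun t _ => hasDerivAt_neg_half_mul_exp_neg_smul_mulVec_dotProduct_self L u t)
    (fun _ _ => hL.dotProduct_mulVec_nonneg _)
    ((hL.tendsto_exp_neg_smul_mulVec_dotProduct_self u).const_mul _)

theorem integral_Ioi_dotProduct_exp_neg_smul_mulVec (hL : L.IsConnectedLaplacian)
    (u : ι → ℝ) :
    ∫ t in Set.Ioi (0 : ℝ), exp (-(t • L)) *ᵥ u ⬝ᵥ L *ᵥ exp (-(t • L)) *ᵥ u =
      (u ⬝ᵥ u - (1 ⬝ᵥ u) ^ 2 / Fintype.card ι) / 2 := by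
  rw [integral_Ioi_of_hasDerivAt_of_nonneg'
    (fun t _ => hasDerivAt_neg_half_mul_exp_neg_smul_mulVec_dotProduct_self L u t)
    (fun _ _ => hL.dotProduct_mulVec_nonneg _)
    ((hL.tendsto_exp_neg_smul_mulVec_dotProduct_self u).const_mul _)]
  simp only [zero_smul, neg_zero, NormedSpace.exp_zero, one_mulVec]
  ring

end IsConnectedLaplacian

end Matrix

section Graph

variable {V E : Type*} [Fintype V] [DecidableEq V] [Fintype E] [DecidableEq E]
  {src snk : E → V} {w : E → ℝ}

theorem dotProduct_incidenceMatrix_laplacian_mulVec (hloop : ∀ e, src e ≠ snk e) (y : V → ℝ) :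
    y ⬝ᵥ (incidenceMatrix src snk * diagonal w * (incidenceMatrix src snk)ᵀ) *ᵥ y =
      ∑ e, w e * (y (src e) - y (snk e)) ^ 2 := by
  rw [dotProduct_mul_diagonal_mul_transpose_mulVec, transpose_incidenceMatrix_mulVec hloop]

theorem isConnectedLaplacian_incidenceMatrix (hloop : ∀ e, src e ≠ snk e) (hw : ∀ e, 0 < w e)
    (A : Matrix V V ℝ)
    (hA : ∀ i j, A i j =
      ∑ e, if (src e = i ∧ snk e = j) ∨ (src e = j ∧ snk e = i) then w e else 0)
    (hconn : ∀ i j : V, Relation.ReflTransGen (fun a b => 0 < A a b) i j) :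
    (incidenceMatrix src snk * diagonal w * (incidenceMatrix src snk)ᵀ).IsConnectedLaplacian := by
  have hnonneg : ∀ y : V → ℝ, ∀ e, 0 ≤ w e * (y (src e) - y (snk e)) ^ 2 :=
    fun y e => mul_nonneg (hw e).le (sq_nonneg _)
  refine ⟨transpose_mul_diagonal_mul_transpose _ _, ?_, fun y => ?_, fun y hy hy0 => ?_⟩
  · rw [← mulVec_mulVec, ← mulVec_mulVec, transpose_incidenceMatrix_mulVec hloop]
    have hzero : (fun e => (1 : V → ℝ) (src e) - (1 : V → ℝ) (snk e)) = 0 :=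
      funext fun _ => sub_self 1
    rw [hzero, mulVec_zero, mulVec_zero]
  · rw [dotProduct_incidenceMatrix_laplacian_mulVec hloop]
    exact sum_nonneg fun e _ => hnonneg y e
  rw [dotProduct_incidenceMatrix_laplacian_mulVec hloop]
  refine (sum_nonneg fun e _ => hnonneg y e).lt_of_ne fun hzero => hy0 ?_
  have hedge : ∀ e, y (src e) = y (snk e) := fun e => by
    have := (sum_eq_zero_iff_of_nonneg fun e _ => hnonneg y e).1 hzero.symm e (mem_univ e)
    simpa [(hw e).ne', sub_eq_zero] using this
  have hadj : ∀ a b, 0 < A a b → y a = y b := fun a b hab => by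
    rw [hA] at hab
    obtain ⟨e, -, he⟩ := exists_ne_zero_of_sum_ne_zero hab.ne'
    rcases ite_ne_right_iff.1 he with ⟨⟨rfl, rfl⟩ | ⟨rfl, rfl⟩, -⟩
    exacts [hedge e, (hedge e).symm]
  have hconst : ∀ i j, y i = y j := fun i j => by
    simpa [Relation.reflTransGen_eq_self] using (hconn i j).lift y hadj
  ext i
  have hsum : (Fintype.card V : ℝ) * y i = 0 := by
    rw [← hy, one_dotProduct, sum_congr rfl fun j _ => hconst j i, sum_const, card_univ,
      nsmul_eq_mul]
  exact (mul_eq_zero.1 hsum).resolve_left (Nat.cast_ne_zero.2 (Fintype.card_pos_iff.2 ⟨i⟩).ne')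

end Graph

theorem stmt_15_general (n k m : ℕ)
    (src snk : Fin k → Fin n) (hloop : ∀ e, src e ≠ snk e)
    (w : Fin k → ℝ) (hw : ∀ e, 0 < w e)
    (A : Matrix (Fin n) (Fin n) ℝ)
    (hA : ∀ i j, A i j =
      ∑ e, if (src e = i ∧ snk e = j) ∨ (src e = j ∧ snk e = i) then w e else 0)
    (hconn : ∀ i j : Fin n, Relation.ReflTransGen (fun a b => 0 < A a b) i j)
    (R : Matrix (Fin n) (Fin k) ℝ)
    (hR : ∀ i e, R i e = if src e = i then 1 else if snk e = i then -1 else 0)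
    (L : Matrix (Fin n) (Fin n) ℝ)
    (hL : L = R * Matrix.diagonal w * Rᵀ)
    (M : Matrix (Fin n) (Fin m) ℝ)
    (g : ℝ → Matrix (Fin k) (Fin m) ℝ)
    (hg : ∀ t, g t =
      (Matrix.diagonal fun e => Real.sqrt (w e)) * Rᵀ * NormedSpace.exp (-(t • L)) * M)
    (Wo : Matrix (Fin n) (Fin n) ℝ)
    (hWo : Wo = (1/2 : ℝ) • (1 : Matrix (Fin n) (Fin n) ℝ)
        - (1/(2*(n:ℝ))) • Matrix.of (fun _ _ => (1:ℝ))) :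
    IntegrableOn (fun t : ℝ => ∑ i, ∑ j, (g t i j) ^ 2) (Set.Ioi 0) volume ∧
    (∫ t in Set.Ioi (0:ℝ), ∑ i, ∑ j, (g t i j) ^ 2) = Matrix.trace (Mᵀ * Wo * M) := by
  obtain rfl : R = incidenceMatrix src snk := Matrix.ext hR
  have hLap : L.IsConnectedLaplacian :=
    hL ▸ isConnectedLaplacian_incidenceMatrix hloop hw A hA hconn
  have hg_sq : (fun t : ℝ => ∑ i, ∑ j, (g t i j) ^ 2) = fun t => ∑ l,
      exp (-(t • L)) *ᵥ Mᵀ l ⬝ᵥ L *ᵥ exp (-(t • L)) *ᵥ Mᵀ l := by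
    ext t
    rw [hg, Matrix.mul_assoc _ _ M, sum_sq_diagonal_sqrt_mul_transpose_mul _ fun e => (hw e).le,
      ← hL]
    rfl
  have htrace : trace (Mᵀ * Wo * M) = ∑ l, (Mᵀ l ⬝ᵥ Mᵀ l - (1 ⬝ᵥ Mᵀ l) ^ 2 / n) / 2 := by
    rw [trace_transpose_mul_mul, hWo]
    simpa using sum_congr rfl fun l _ => dotProduct_half_sub_centering_mulVec (Mᵀ l)
  have hint := fun l => hLap.integrableOn_Ioi_dotProduct_exp_neg_smul_mulVec (Mᵀ l)
  rw [hg_sq, htrace]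
  refine ⟨integrable_finsetSum _ fun l _ => hint l, ?_⟩
  rw [integral_finsetSum _ fun l _ => hint l]
  exact sum_congr rfl fun l _ => by
    simpa using hLap.integral_Ioi_dotProduct_exp_neg_smul_mulVec (Mᵀ l)

/-- The impulse response `g(t) = W^{1/2} Rᵀ exp(-Lt) M` of the leader-follower
consensus system on a connected graph satisfies
`∫₀^∞ ‖g(t)‖_F² dt = tr(Mᵀ W_o M) < ∞`, where `W_o = (1/2)Iₙ - (1/(2n))𝟙𝟙ᵀ`;
in particular `g ∈ L²`. -/
theorem stmt_15 (n k m : ℕ) (hn : 0 < n)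
    (src snk : Fin k → Fin n) (hloop : ∀ e, src e ≠ snk e)
    (w : Fin k → ℝ) (hw : ∀ e, 0 < w e)
    (A : Matrix (Fin n) (Fin n) ℝ)
    (hA : ∀ i j, A i j =
      ∑ e, if (src e = i ∧ snk e = j) ∨ (src e = j ∧ snk e = i) then w e else 0)
    (hconn : ∀ i j : Fin n, Relation.ReflTransGen (fun a b => 0 < A a b) i j)
    (R : Matrix (Fin n) (Fin k) ℝ)
    (hR : ∀ i e, R i e = if src e = i then 1 else if snk e = i then -1 else 0)
    (L : Matrix (Fin n) (Fin n) ℝ)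
    (hL : L = R * Matrix.diagonal w * Rᵀ)
    (v : Fin m → Fin n) (hv : Function.Injective v)
    (M : Matrix (Fin n) (Fin m) ℝ)
    (hM : ∀ i l, M i l = if i = v l then 1 else 0)
    (g : ℝ → Matrix (Fin k) (Fin m) ℝ)
    (hg : ∀ t, g t =
      (Matrix.diagonal fun e => Real.sqrt (w e)) * Rᵀ * NormedSpace.exp (-(t • L)) * M)
    (Wo : Matrix (Fin n) (Fin n) ℝ)
    (hWo : Wo = (1/2 : ℝ) • (1 : Matrix (Fin n) (Fin n) ℝ)
        - (1/(2*(n:ℝ))) • Matrix.of (fun _ _ => (1:ℝ))) :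
    IntegrableOn (fun t : ℝ => ∑ i, ∑ j, (g t i j) ^ 2) (Set.Ioi 0) volume ∧
    (∫ t in Set.Ioi (0:ℝ), ∑ i, ∑ j, (g t i j) ^ 2) = Matrix.trace (Mᵀ * Wo * M) :=
  stmt_15_general n k m src snk hloop w hw A hA hconn R hR L hL M g hg Wo hWo
end

section
/- Fix J ⊆ {1,…,m} with |J| = r and let Z_J^{n×m} be the set of 0-1 matrices X ∈ R^{n×m} such that columns of X indexed by J are zero and the remaining m - r columns are distinct standard basis vectors of R^n. Let W_o = (1/2)I_n - (1/(2n))𝟙𝟙ᵀ and let M have distinct standard-basis columns. Then min over X ∈ Z_J^{n×m} of tr((M - X)ᵀ W_o (M - X)) is attained at X = M_J (M with columns in J zeroed), with minimum value (r/2)(1 - 1/n). -/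
open Matrix Finset

private lemma trace_form {n m : ℕ}
    (Wo : Matrix (Fin n) (Fin n) ℝ)
    (hWo : Wo = (1/2 : ℝ) • (1 : Matrix (Fin n) (Fin n) ℝ)
        - (1/(2*(n:ℝ))) • Matrix.of (fun _ _ => (1:ℝ)))
    (D : Matrix (Fin n) (Fin m) ℝ) :
    Matrix.trace (Dᵀ * Wo * D) =
      ∑ j, ((1/2 : ℝ) * ∑ i, (D i j)^2
        - (1/(2*(n:ℝ))) * (∑ i, D i j)^2) := by
  subst hWo
  simp only [Matrix.trace, Matrix.diag, Matrix.mul_apply, Matrix.transpose_apply,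
    Matrix.sub_apply, Matrix.smul_apply, Matrix.one_apply, Matrix.of_apply,
    smul_eq_mul, mul_ite, mul_one, mul_zero]
  refine Finset.sum_congr rfl fun j _ => ?_
  have key : ∀ x : Fin n, ∑ x1 : Fin n, D x1 j * ((if x1 = x then (1/2:ℝ) else 0) - 1/(2*(n:ℝ)))
      = (1/2:ℝ) * D x j - (1/(2*(n:ℝ))) * ∑ i, D i j := by
    intro x
    simp only [mul_sub, Finset.sum_sub_distrib, mul_ite, mul_zero]
    rw [Finset.sum_ite_eq' Finset.univ x]
    rw [← Finset.sum_mul]; simp; ring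
  simp_rw [key, sub_mul, Finset.sum_sub_distrib]
  congr 1
  · rw [Finset.mul_sum]; exact Finset.sum_congr rfl fun x _ => by ring
  · rw [← Finset.mul_sum]; ring

private lemma term_basis {n : ℕ} (a : Fin n) :
    (1/2:ℝ) * (∑ i, (if i = a then (1:ℝ) else 0)^2)
      - (1/(2*(n:ℝ))) * (∑ i, if i = a then (1:ℝ) else 0)^2
    = 1/2 - 1/(2*(n:ℝ)) := by
  have h1 : (∑ i, if i = a then (1:ℝ) else 0) = 1 := by simp
  have h2 : (∑ i, (if i = a then (1:ℝ) else 0)^2) = 1 := by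
    have : ∀ i : Fin n, ((if i = a then (1:ℝ) else 0))^2 = if i = a then 1 else 0 := by
      intro i; split <;> simp
    simp_rw [this]; simp
  rw [h1, h2]; ring

/-- Combinatorial leader selection: over the finite feasible set `Z_J^{n×m}` of 0-1
matrices whose columns in `J` vanish and whose remaining columns are distinct standard
basis vectors, the objective `tr((M - X)ᵀ W_o (M - X))` is minimized at `X = M_J`
(`M` with the columns in `J` zeroed), with minimum value `(r/2)(1 - 1/n)`. -/
theorem stmt_18 (n m r : ℕ) (hn : 0 < n) (hmn : m ≤ n)
    (v : Fin m → Fin n) (hv : Function.Injective v)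
    (M : Matrix (Fin n) (Fin m) ℝ)
    (hM : ∀ i l, M i l = if i = v l then 1 else 0)
    (J : Finset (Fin m)) (hr : J.card = r)
    (MJ : Matrix (Fin n) (Fin m) ℝ)
    (hMJ : MJ = Matrix.of fun i j => if j ∈ J then 0 else M i j)
    (Wo : Matrix (Fin n) (Fin n) ℝ)
    (hWo : Wo = (1/2 : ℝ) • (1 : Matrix (Fin n) (Fin n) ℝ)
        - (1/(2*(n:ℝ))) • Matrix.of (fun _ _ => (1:ℝ))) :
    -- `M_J` belongs to the feasible set `Z_J^{n×m}`
    (∃ u : Fin m → Fin n,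
      (∀ j ∉ J, ∀ i, MJ i j = if i = u j then 1 else 0) ∧
      (∀ j ∈ J, ∀ i, MJ i j = 0) ∧
      (∀ j j', j ∉ J → j' ∉ J → u j = u j' → j = j')) ∧
    -- `M_J` minimizes the objective over `Z_J^{n×m}`
    (∀ X : Matrix (Fin n) (Fin m) ℝ,
      (∃ u : Fin m → Fin n,
        (∀ j ∉ J, ∀ i, X i j = if i = u j then 1 else 0) ∧
        (∀ j ∈ J, ∀ i, X i j = 0) ∧
        (∀ j j', j ∉ J → j' ∉ J → u j = u j' → j = j')) →
      Matrix.trace ((M - MJ)ᵀ * Wo * (M - MJ)) ≤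
        Matrix.trace ((M - X)ᵀ * Wo * (M - X))) ∧
    -- the minimum value
    Matrix.trace ((M - MJ)ᵀ * Wo * (M - MJ)) = ((r:ℝ)/2) * (1 - 1/(n:ℝ)) := by
  set c : ℝ := 1/2 - 1/(2*(n:ℝ)) with hc
  -- trace for MJ
  have hDMJ : ∀ i j, (M - MJ) i j = if j ∈ J then (if i = v j then (1:ℝ) else 0) else 0 := by
    intro i j
    simp only [Matrix.sub_apply, hMJ, Matrix.of_apply]
    by_cases hj : j ∈ J <;> simp [hj, hM]
  have hMJtr : Matrix.trace ((M - MJ)ᵀ * Wo * (M - MJ)) = (r:ℝ) * c := by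
    rw [trace_form Wo hWo]
    have : ∀ j : Fin m, ((1/2 : ℝ) * ∑ i, ((M - MJ) i j)^2
        - (1/(2*(n:ℝ))) * (∑ i, (M - MJ) i j)^2) = if j ∈ J then c else 0 := by
      intro j
      by_cases hj : j ∈ J
      · simp only [hj, if_true]
        simp_rw [hDMJ, hj, if_true]
        exact term_basis (v j)
      · simp only [hj, if_false]
        simp_rw [hDMJ, hj, if_false]
        simp
    rw [Finset.sum_congr rfl fun j _ => this j]
    rw [Finset.sum_ite_mem, Finset.univ_inter, Finset.sum_const, hr, nsmul_eq_mul]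
  have hnz : (n:ℝ) ≠ 0 := Nat.cast_ne_zero.mpr hn.ne'
  refine ⟨⟨v, ?_, ?_, fun j j' _ _ h => hv h⟩, ?_, ?_⟩
  · intro j hj i; simp [hMJ, hj, hM]
  · intro j hj i; simp [hMJ, hj]
  · rintro X ⟨u, hu1, hu2, hu3⟩
    rw [hMJtr, trace_form Wo hWo]
    have hbound : ∀ j : Fin m, (if j ∈ J then c else 0) ≤
        ((1/2 : ℝ) * ∑ i, ((M - X) i j)^2 - (1/(2*(n:ℝ))) * (∑ i, (M - X) i j)^2) := by
      intro j
      by_cases hj : j ∈ J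
      · have hcol : ∀ i, (M - X) i j = if i = v j then (1:ℝ) else 0 := by
          intro i; simp [Matrix.sub_apply, hu2 j hj, hM]
        simp only [hj, if_true]
        simp_rw [hcol]
        exact le_of_eq (term_basis (v j)).symm
      · have hcol : ∀ i, (M - X) i j
            = (if i = v j then (1:ℝ) else 0) - (if i = u j then (1:ℝ) else 0) := by
          intro i; simp [Matrix.sub_apply, hu1 j hj, hM]
        simp only [hj, if_false]
        simp_rw [hcol]
        by_cases huv : u j = v j
        · simp [huv]
        · have h1 : (∑ i, ((if i = v j then (1:ℝ) else 0) - (if i = u j then (1:ℝ) else 0))) = 0 := by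
            rw [Finset.sum_sub_distrib]; simp
          have h2 : (∑ i, ((if i = v j then (1:ℝ) else 0) - (if i = u j then (1:ℝ) else 0))^2) = 2 := by
            have : ∀ i : Fin n, ((if i = v j then (1:ℝ) else 0) - (if i = u j then (1:ℝ) else 0))^2
                = (if i = v j then (1:ℝ) else 0) + (if i = u j then (1:ℝ) else 0) := by
              intro i
              by_cases h1 : i = v j <;> by_cases h2 : i = u j <;>
                simp_all [h1, h2] <;> ring_nf <;> simp_all
            simp_rw [this]
            rw [Finset.sum_add_distrib]; simp; norm_num
          rw [h1, h2]; norm_num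
    calc (r:ℝ) * c = ∑ j : Fin m, (if j ∈ J then c else 0) := by
          rw [Finset.sum_ite_mem, Finset.univ_inter, Finset.sum_const, hr, nsmul_eq_mul]
      _ ≤ _ := Finset.sum_le_sum fun j _ => hbound j
  · rw [hMJtr, hc]; field_simp
end
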